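/- Let L be a finite-dimensional Lie algebra, A/B a non-abelian chief factor of L, and U, S maximal subalgebras of L with U_L ≠ S_L both supplementing A/B, where U is of type 3 (L/U_L is primitive of type 3) and S is monolithic (L/S_L is monolithic primitive). Then U_L ⊂ S_L = C_L(A/B), and M = A + (U ∩ S) is a maximal subalgebra of L of type 2 with core M_L = A + U_L which supplements the chief factor S_L/U_L. -/

import Mathlib

section ChiefFactors

variable (K : Type*) (L : Type*) [Field K] [LieRing L] [LieAlgebra K L]

/-- `A/B` is a chief factor of `L`: `B` is an ideal and `A/B` is a minimal ideal of `L/B`,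
i.e. `B < A` and there is no ideal strictly between `B` and `A`. -/
def IsChiefFactor (A B : LieIdeal K L) : Prop :=
  B < A ∧ ∀ C : LieIdeal K L, B < C → C ≤ A → C = A

/-- The factor `A/B` is abelian. -/
def FactorAbelian (A B : LieIdeal K L) : Prop :=
  ∀ a ∈ A, ∀ a' ∈ A, ⁅a, a'⁆ ∈ B

/-- `M` is a maximal (proper) subalgebra of `L`. -/
def IsMaximalSubalgebra (M : LieSubalgebra K L) : Prop :=
  M ≠ ⊤ ∧ ∀ N : LieSubalgebra K L, M < N → N = ⊤

/-- `L = A + M`. -/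
def SumIsTop (A : LieIdeal K L) (M : LieSubalgebra K L) : Prop :=
  ∀ x : L, ∃ a ∈ A, ∃ m ∈ M, x = a + m

/-- `M` supplements the factor `A/B` : `L = A + M` and `B ⊆ A ∩ M`. -/
def Supplements (M : LieSubalgebra K L) (A B : LieIdeal K L) : Prop :=
  SumIsTop K L A M ∧ B ≤ A ∧ (B : Set L) ⊆ M

/-- `M` complements the factor `A/B` : `L = A + M` and `A ∩ M = B`. -/
def Complements (M : LieSubalgebra K L) (A B : LieIdeal K L) : Prop :=
  SumIsTop K L A M ∧ (A : Set L) ∩ M = B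

/-- `A/B` is a supplemented chief factor (supplemented by a maximal subalgebra). -/
def SupplementedFactor (A B : LieIdeal K L) : Prop :=
  ∃ M : LieSubalgebra K L, IsMaximalSubalgebra K L M ∧ Supplements K L M A B

/-- `A/B` is a Frattini chief factor: `A/B ⊆ φ(L/B)`, equivalently `A` is contained in
every maximal subalgebra of `L` containing `B`. -/
def FrattiniFactor (A B : LieIdeal K L) : Prop :=
  IsChiefFactor K L A B ∧
    ∀ M : LieSubalgebra K L, IsMaximalSubalgebra K L M → (B : Set L) ⊆ M → (A : Set L) ⊆ M

/-- `A/B ↘ C/D` : `A = B + C` and `B ∩ C = D`. -/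
def Searrow (A B C D : LieIdeal K L) : Prop := A = B ⊔ C ∧ B ⊓ C = D

/-- `[A/B ↘ C/D]` is an m-crossing. -/
def MCrossing (A B C D : LieIdeal K L) : Prop :=
  IsChiefFactor K L A B ∧ IsChiefFactor K L C D ∧ Searrow K L A B C D ∧
    FrattiniFactor K L A B ∧ SupplementedFactor K L C D

/-- The chief factors `A/B` and `C/D` are m-related. -/
def MRelated (A B C D : LieIdeal K L) : Prop :=
  (∃ R S, IsChiefFactor K L R S ∧ SupplementedFactor K L R S ∧
     Searrow K L R S A B ∧ Searrow K L R S C D) ∨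
  (∃ U V W X, MCrossing K L U V W X ∧ Searrow K L V X A B ∧ Searrow K L W X C D) ∨
  (∃ Y Z, FrattiniFactor K L Y Z ∧ Searrow K L A B Y Z ∧ Searrow K L C D Y Z) ∨
  (∃ U V W X, MCrossing K L U V W X ∧ Searrow K L A B U V ∧ Searrow K L C D U W)

/-- `I` is the core `M_L` of the subalgebra `M`: the largest ideal of `L` contained in `M`. -/
def IsCoreOf (I : LieIdeal K L) (M : LieSubalgebra K L) : Prop :=
  (I : Set L) ⊆ M ∧ ∀ J : LieIdeal K L, (J : Set L) ⊆ M → J ≤ I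

/-- The quotient `L/I` is primitive: it has a core-free maximal subalgebra. -/
def QuotPrimitive (I : LieIdeal K L) : Prop :=
  ∃ M : LieSubalgebra K L, IsMaximalSubalgebra K L M ∧ IsCoreOf K L I M

/-- The quotient `L/I` is monolithic: it has a unique minimal ideal. -/
def QuotMonolithic (I : LieIdeal K L) : Prop :=
  ∃! J : LieIdeal K L, IsChiefFactor K L J I

/-- `M` is a monolithic maximal subalgebra supplementing `A/B` :
`L/M_L` is a monolithic primitive Lie algebra. -/
def MonolithicSupplement (M : LieSubalgebra K L) (A B : LieIdeal K L) : Prop :=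
  IsMaximalSubalgebra K L M ∧ Supplements K L M A B ∧
    ∃ I : LieIdeal K L, IsCoreOf K L I M ∧ QuotMonolithic K L I

/-- `A/B` and `C/D` are `L`-isomorphic: there is an isomorphism of `L`-modules between
the factors which moreover preserves the induced Lie brackets. -/
def LIso (A B C D : LieIdeal K L) : Prop :=
  B ≤ A ∧ D ≤ C ∧
  ∃ e : (A ⧸ (LieSubmodule.comap (LieSubmodule.incl A) B)) ≃ₗ⁅K,L⁆
        (C ⧸ (LieSubmodule.comap (LieSubmodule.incl C) D)),
    ∀ (a a' : A) (c c' : C),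
      e (LieSubmodule.Quotient.mk a) = LieSubmodule.Quotient.mk c →
      e (LieSubmodule.Quotient.mk a') = LieSubmodule.Quotient.mk c' →
      e (LieSubmodule.Quotient.mk ⟨⁅(a : L), (a' : L)⁆, A.lie_mem a'.2⟩) =
        LieSubmodule.Quotient.mk ⟨⁅(c : L), (c' : L)⁆, C.lie_mem c'.2⟩

/-- `L/I` is a primitive Lie algebra of type 3 with (exactly two) minimal ideals
`J1/I` and `J2/I`, both non-abelian. -/
def QuotPrimitiveType3 (I J1 J2 : LieIdeal K L) : Prop :=
  QuotPrimitive K L I ∧ J1 ≠ J2 ∧ IsChiefFactor K L J1 I ∧ IsChiefFactor K L J2 I ∧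
    ¬ FactorAbelian K L J1 I ∧ ¬ FactorAbelian K L J2 I ∧
    ∀ J : LieIdeal K L, IsChiefFactor K L J I → J = J1 ∨ J = J2

/-- `A/B` and `C/D` are `L`-connected. -/
def LConnected (A B C D : LieIdeal K L) : Prop :=
  LIso K L A B C D ∨
    ∃ I J1 J2 : LieIdeal K L, QuotPrimitiveType3 K L I J1 J2 ∧
      LIso K L J1 I A B ∧ LIso K L J2 I C D

end ChiefFactors

/-!
Since `A ∩ S_L = B` and `L/S_L` is monolithic, its minimal ideal is `(A + S_L)/S_L`, so an ideal
strictly between `S_L` and `C_L(A/B)` would put `A` inside `C_L(A/B)`, against `[A, A] ⊄ B`; hence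
`C_L(A/B) = S_L`, and `U_L ⊆ C_L(A/B)` because `A ∩ U_L = B`.
In a primitive algebra `L/I` with core-free maximal subalgebra `M`, `C_L(X/I) ∩ M ⊆ I` for every
ideal `X ⊋ I`, so `C_L(X/I) = Y` for every ideal `I ⊊ Y ⊆ C_L(X/I)`. Applied in `L/U_L` to
`X = A + U_L`, whose centralizer contains `S_L`, this makes `S_L/U_L` a minimal ideal with
centralizer `A + U_L`. The subalgebra `A + (U ∩ S)` supplements
`S_L/U_L`, so its core is `C_L(S_L/U_L) = A + U_L`, and `L/(A + U_L)` has the single minimal ideal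
`(S_L + A + U_L)/(A + U_L)`, non-abelian like `S_L/U_L`. It is proper because `A ∩ U ⊆ U_L`
(`A` centralizes `S_L/B`), and maximal because no subalgebra lies strictly between `U ∩ S`
and `U`.
-/

section

variable {K L : Type*} [Field K] [LieRing L] [LieAlgebra K L]

section ChiefFactorLattice

theorem IsChiefFactor.inf_eq_of_not_le {A B I : LieIdeal K L} (h : IsChiefFactor K L A B)
    (hBI : B ≤ I) (hAI : ¬ A ≤ I) : A ⊓ I = B := by
  by_contra hne
  exact hAI (inf_eq_left.mp (h.2 _ (lt_of_le_of_ne (le_inf h.1.le hBI) (Ne.symm hne)) inf_le_left))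

theorem IsChiefFactor.sup_of_not_le {A B I : LieIdeal K L} (h : IsChiefFactor K L A B)
    (hBI : B ≤ I) (hAI : ¬ A ≤ I) : IsChiefFactor K L (A ⊔ I) I := by
  refine ⟨lt_of_le_of_ne le_sup_right fun he => hAI (he ▸ le_sup_left), fun D hID hDA => ?_⟩
  by_cases hAD : A ≤ D
  · exact le_antisymm hDA (sup_le hAD hID.le)
  · have hmod : (I ⊔ A) ⊓ D = I ⊔ A ⊓ D := sup_inf_assoc_of_le A hID.le
    rw [sup_comm, inf_eq_right.mpr hDA, h.inf_eq_of_not_le (hBI.trans hID.le) hAD,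
      sup_eq_left.mpr hBI] at hmod
    exact absurd hmod hID.ne'

theorem exists_isChiefFactor_le [FiniteDimensional K L] {I D : LieIdeal K L} (h : I < D) :
    ∃ E ≤ D, IsChiefFactor K L E I := by
  obtain ⟨E, ⟨hIE, hED⟩, hmin⟩ :=
    (LieSubmodule.wellFoundedLT_of_isArtinian K L L).wf.has_min {C | I < C ∧ C ≤ D}
      ⟨D, h, le_rfl⟩
  refine ⟨E, hED, hIE, fun C hIC hCE => ?_⟩
  by_contra hne
  exact hmin C ⟨hIC, hCE.trans hED⟩ (lt_of_le_of_ne hCE hne)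

end ChiefFactorLattice

section FactorCentralizer

def factorCentralizer (A B : LieIdeal K L) : LieIdeal K L where
  carrier := {x | ∀ a ∈ A, ⁅x, a⁆ ∈ B}
  add_mem' hx hy a ha := by rw [add_lie]; exact add_mem (hx a ha) (hy a ha)
  zero_mem' a _ := by rw [zero_lie]; exact zero_mem B
  smul_mem' c _ hx a ha := by rw [smul_lie]; exact B.smul_mem c (hx a ha)
  lie_mem {y x} hx a ha := by
    rw [lie_lie]; exact sub_mem (B.lie_mem (hx a ha)) (hx _ (A.lie_mem ha))

variable {A B I X Y : LieIdeal K L}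

theorem factorAbelian_iff_le_factorCentralizer :
    FactorAbelian K L A B ↔ A ≤ factorCentralizer A B :=
  Iff.rfl

theorem le_factorCentralizer_comm : X ≤ factorCentralizer Y B ↔ Y ≤ factorCentralizer X B :=
  ⟨fun h y hy x hx => by rw [← lie_skew]; exact neg_mem (h hx y hy),
   fun h x hx y hy => by rw [← lie_skew]; exact neg_mem (h hy x hx)⟩

theorem le_factorCentralizer_self : B ≤ factorCentralizer A B :=
  fun b hb a _ => lie_mem_left K L B b a hb

theorem le_factorCentralizer_of_inf_eq (h : A ⊓ I = B) : I ≤ factorCentralizer A B :=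
  fun x hx a ha =>
    h ▸ (LieSubmodule.mem_inf _ _ _).mpr ⟨A.lie_mem ha, lie_mem_left K L I x a hx⟩

theorem factorCentralizer_le_sup (hBI : B ≤ I) :
    factorCentralizer A B ≤ factorCentralizer (A ⊔ I) I := by
  intro x hx _ hy
  obtain ⟨a, ha, i, hi, rfl⟩ := (LieSubmodule.mem_sup _ _ _).mp hy
  rw [lie_add]
  exact add_mem (hBI (hx a ha)) (lie_mem_right K L I x i hi)

end FactorCentralizer

section Subalgebras

variable {I N : LieIdeal K L} {M : LieSubalgebra K L}

theorem mem_ideal_sup_iff {x : L} :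
    x ∈ (I : LieSubalgebra K L) ⊔ M ↔ ∃ a ∈ I, ∃ m ∈ M, a + m = x := by
  let T : LieSubalgebra K L :=
    { toSubmodule := (I : Submodule K L) ⊔ M.toSubmodule
      lie_mem' := by
        intro _ _ hx hy
        obtain ⟨a, ha, m, hm, rfl⟩ := Submodule.mem_sup.mp hx
        obtain ⟨a', ha', m', hm', rfl⟩ := Submodule.mem_sup.mp hy
        rw [add_lie, lie_add, lie_add, ← add_assoc]
        exact add_mem (Submodule.mem_sup_left (add_mem (add_mem (I.lie_mem ha')
          (lie_mem_left K L I a m' ha)) (I.lie_mem ha')))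
          (Submodule.mem_sup_right (M.lie_mem hm hm')) }
  refine ⟨fun hx => Submodule.mem_sup.mp ?_, ?_⟩
  · have hT : (I : LieSubalgebra K L) ⊔ M ≤ T :=
      sup_le (fun _ hy => Submodule.mem_sup_left hy) (fun _ hy => Submodule.mem_sup_right hy)
    exact hT hx
  · rintro ⟨a, ha, m, hm, rfl⟩
    exact add_mem (le_sup_left (b := M) (a := (I : LieSubalgebra K L)) ha)
      ((le_sup_right : M ≤ (I : LieSubalgebra K L) ⊔ M) hm)

theorem sumIsTop_iff : SumIsTop K L I M ↔ (I : LieSubalgebra K L) ⊔ M = ⊤ := by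
  refine ⟨fun h => eq_top_iff.mpr fun x _ => ?_, fun h x => ?_⟩
  · obtain ⟨a, ha, m, hm, hx⟩ := h x
    exact mem_ideal_sup_iff.mpr ⟨a, ha, m, hm, hx.symm⟩
  · obtain ⟨a, ha, m, hm, hx⟩ := mem_ideal_sup_iff.mp (h ▸ LieSubalgebra.mem_top x)
    exact ⟨a, ha, m, hm, hx.symm⟩

theorem sumIsTop_of_not_subset (hM : IsMaximalSubalgebra K L M) (hI : ¬ (I : Set L) ⊆ M) :
    SumIsTop K L I M :=
  sumIsTop_iff.mpr <|
    hM.2 _ (lt_of_le_of_ne le_sup_right fun he => hI fun _ hx => he ▸ le_sup_left (b := M) hx)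

theorem not_subset_of_sumIsTop (hM : M ≠ ⊤) (hIM : SumIsTop K L I M) :
    ¬ (I : Set L) ⊆ M := by
  refine fun hI => hM (eq_top_iff.mpr fun x _ => ?_)
  obtain ⟨a, ha, m, hm, rfl⟩ := hIM x
  exact add_mem (hI ha) hm

theorem IsCoreOf.not_le_of_sumIsTop (hM : M ≠ ⊤) (hNM : SumIsTop K L N M)
    (hI : IsCoreOf K L I M) : ¬ N ≤ I :=
  fun h => not_subset_of_sumIsTop hM hNM fun _ hx => hI.1 (h hx)

theorem sup_subset_ideal_sup (hIM : (I : Set L) ⊆ M) :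
    ((N ⊔ I : LieIdeal K L) : Set L) ⊆ ((N : LieSubalgebra K L) ⊔ M : LieSubalgebra K L) :=
  fun _ hx => by
    obtain ⟨n, hn, i, hi, rfl⟩ := (LieSubmodule.mem_sup _ _ _).mp hx
    exact mem_ideal_sup_iff.mpr ⟨n, hn, i, hIM hi, rfl⟩

theorem IsCoreOf.unique (hI : IsCoreOf K L I M) (hN : IsCoreOf K L N M) : I = N :=
  le_antisymm (hN.2 I hI.1) (hI.2 N hN.1)

theorem IsCoreOf.sumIsTop (hM : IsMaximalSubalgebra K L M) (hI : IsCoreOf K L I M)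
    (hIN : I < N) : SumIsTop K L N M :=
  sumIsTop_of_not_subset hM fun hN => hIN.not_ge (hI.2 N hN)

end Subalgebras

section Core

variable {B I P X Y : LieIdeal K L} {M : LieSubalgebra K L}

-- `C_L(X/B) ∩ M` is an ideal: `L = X + M`, and `[X, C_L(X/B)] ⊆ B ⊆ M_L`.
theorem mem_core_of_mem_factorCentralizer (hI : IsCoreOf K L I M) (hXM : SumIsTop K L X M)
    (hBI : B ≤ I) {c : L} (hc : c ∈ factorCentralizer X B) (hcM : c ∈ M) : c ∈ I := by
  let J : LieIdeal K L :=
    { toSubmodule := (factorCentralizer X B : Submodule K L) ⊓ M.toSubmodule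
      lie_mem := by
        intro y z hz
        obtain ⟨hzC, hzM⟩ := Submodule.mem_inf.mp hz
        obtain ⟨a, ha, m, hm, rfl⟩ := hXM y
        have hab : ⁅a, z⁆ ∈ B := by rw [← lie_skew]; exact neg_mem (hzC a ha)
        rw [add_lie]
        exact add_mem (Submodule.mem_inf.mpr ⟨le_factorCentralizer_self hab, hI.1 (hBI hab)⟩)
          (Submodule.mem_inf.mpr ⟨(factorCentralizer X B).lie_mem hzC, M.lie_mem hm hzM⟩) }
  exact hI.2 J (fun x hx => (Submodule.mem_inf.mp hx).2) (Submodule.mem_inf.mpr ⟨hc, hcM⟩)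

theorem factorCentralizer_eq_of_isCoreOf (hM : IsMaximalSubalgebra K L M)
    (hI : IsCoreOf K L I M) (hIX : I < X) (hIY : I < Y) (hY : Y ≤ factorCentralizer X I) :
    factorCentralizer X I = Y := by
  refine le_antisymm (fun c hc => ?_) hY
  obtain ⟨y, hy, m, hm, rfl⟩ := hI.sumIsTop hM hIY c
  have hmC : m ∈ factorCentralizer X I := by
    simpa using sub_mem hc (hY hy)
  exact add_mem hy
    (hIY.le (mem_core_of_mem_factorCentralizer hI (hI.sumIsTop hM hIX) le_rfl hmC hm))

theorem IsChiefFactor.of_le_factorCentralizer [FiniteDimensional K L]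
    (hM : IsMaximalSubalgebra K L M) (hI : IsCoreOf K L I M) (hP : IsChiefFactor K L P I)
    (hIY : I < Y) (hPY : ¬ P ≤ Y) (hY : Y ≤ factorCentralizer P I) :
    IsChiefFactor K L Y I := by
  obtain ⟨E, hEY, hE⟩ := exists_isChiefFactor_le hIY
  have hPE : P ⊓ E = I := hP.inf_eq_of_not_le hE.1.le fun h => hPY (h.trans hEY)
  have hCE := factorCentralizer_eq_of_isCoreOf hM hI hP.1 hE.1 (le_factorCentralizer_of_inf_eq hPE)
  exact le_antisymm hEY (hCE ▸ hY) ▸ hE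

end Core

section Monolithic

variable {A B I J N : LieIdeal K L} {M : LieSubalgebra K L}

theorem factorCentralizer_eq_of_quotMonolithic [FiniteDimensional K L]
    (hAB : IsChiefFactor K L A B) (hna : ¬ FactorAbelian K L A B) (hBI : B ≤ I)
    (hAI : ¬ A ≤ I) (hI : QuotMonolithic K L I) : factorCentralizer A B = I := by
  have hIC : I ≤ factorCentralizer A B :=
    le_factorCentralizer_of_inf_eq (hAB.inf_eq_of_not_le hBI hAI)
  refine ((lt_or_eq_of_le hIC).resolve_left fun hlt => hna ?_).symm
  obtain ⟨E, hEC, hE⟩ := exists_isChiefFactor_le hlt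
  obtain ⟨_, -, huniq⟩ := hI
  have hAE : A ⊔ I = E := (huniq _ (hAB.sup_of_not_le hBI hAI)).trans (huniq _ hE).symm
  exact factorAbelian_iff_le_factorCentralizer.mpr (le_sup_left.trans (hAE.le.trans hEC))

theorem IsChiefFactor.eq_sup_of_isChiefFactor_factorCentralizer
    (hN : IsChiefFactor K L N I) (hna : ¬ FactorAbelian K L N I)
    (hJ : IsChiefFactor K L J (factorCentralizer N I)) : J = N ⊔ factorCentralizer N I := by
  have hNJ : N ≤ J := by
    by_contra hNJ
    have := le_factorCentralizer_of_inf_eq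
      (hN.inf_eq_of_not_le (le_factorCentralizer_self.trans hJ.1.le) hNJ)
    exact hJ.1.not_ge this
  have hNC : ¬ N ≤ factorCentralizer N I := factorAbelian_iff_le_factorCentralizer.not.mp hna
  exact (hJ.2 _ (hN.sup_of_not_le le_factorCentralizer_self hNC).1 (sup_le hNJ hJ.1.le)).symm

theorem quotMonolithic_factorCentralizer (hN : IsChiefFactor K L N I)
    (hna : ¬ FactorAbelian K L N I) : QuotMonolithic K L (factorCentralizer N I) :=
  ⟨_, hN.sup_of_not_le le_factorCentralizer_self
    (factorAbelian_iff_le_factorCentralizer.not.mp hna), fun _ hJ =>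
    hN.eq_sup_of_isChiefFactor_factorCentralizer hna hJ⟩

theorem not_factorAbelian_of_isChiefFactor_factorCentralizer (hN : IsChiefFactor K L N I)
    (hna : ¬ FactorAbelian K L N I) (hJ : IsChiefFactor K L J (factorCentralizer N I)) :
    ¬ FactorAbelian K L J (factorCentralizer N I) := by
  intro hab
  have hNC := factorAbelian_iff_le_factorCentralizer.not.mp hna
  have hNJ : N ≤ J := hN.eq_sup_of_isChiefFactor_factorCentralizer hna hJ ▸ le_sup_left
  refine hna fun n hn n' hn' => ?_
  rw [← hN.inf_eq_of_not_le le_factorCentralizer_self hNC]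
  exact (LieSubmodule.mem_inf _ _ _).mpr ⟨N.lie_mem hn', hab n (hNJ hn) n' (hNJ hn')⟩

theorem isCoreOf_factorCentralizer (hM : M ≠ ⊤) (hNM : SumIsTop K L N M)
    (hIM : (I : Set L) ⊆ M) (hN : IsChiefFactor K L N I)
    (hCM : (factorCentralizer N I : Set L) ⊆ M) : IsCoreOf K L (factorCentralizer N I) M := by
  refine ⟨hCM, fun J hJ => ?_⟩
  have hJI : ((J ⊔ I : LieIdeal K L) : Set L) ⊆ M := fun x hx => by
    obtain ⟨j, hj, i, hi, rfl⟩ := (LieSubmodule.mem_sup _ _ _).mp hx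
    exact add_mem (hJ hj) (hIM hi)
  have hNJI : ¬ N ≤ J ⊔ I := fun h => not_subset_of_sumIsTop hM hNM fun x hx => hJI (h hx)
  exact le_sup_left.trans (le_factorCentralizer_of_inf_eq (hN.inf_eq_of_not_le le_sup_right hNJI))

end Monolithic

section IdealSupInf

variable {A N UL SL : LieIdeal K L} {U S X : LieSubalgebra K L}

theorem eq_inf_or_eq_of_inf_le_of_le (hS : IsMaximalSubalgebra K L S) (hNS : (N : Set L) ⊆ S)
    (hNU : SumIsTop K L N U) (hX : U ⊓ S ≤ X) (hXU : X ≤ U) : X = U ⊓ S ∨ X = U := by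
  by_cases hXS : X ≤ S
  · exact Or.inl (le_antisymm (le_inf hXU hXS) hX)
  right
  have hSNX : S ≤ (N : LieSubalgebra K L) ⊔ X := fun s hs => by
    obtain ⟨n, hn, u, hu, rfl⟩ := hNU s
    have huS : u ∈ S := by simpa using sub_mem hs (hNS hn)
    exact mem_ideal_sup_iff.mpr
      ⟨n, hn, u, hX ((LieSubalgebra.mem_inf _ _ _).mpr ⟨hu, huS⟩), rfl⟩
  have hNX : SumIsTop K L N X := sumIsTop_iff.mpr <|
    hS.2 _ (lt_of_le_of_ne hSNX fun h => hXS (h ▸ le_sup_right))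
  refine le_antisymm hXU fun u hu => ?_
  obtain ⟨n, hn, x, hx, rfl⟩ := hNX u
  have hnU : n ∈ U := by simpa using sub_mem hu (hXU hx)
  exact add_mem (hX ((LieSubalgebra.mem_inf _ _ _).mpr ⟨hnU, hNS hn⟩)) hx

theorem isMaximalSubalgebra_ideal_sup_inf (hS : IsMaximalSubalgebra K L S)
    (hNS : (N : Set L) ⊆ S) (hNU : SumIsTop K L N U) (hAU : SumIsTop K L A U)
    (hne : (A : LieSubalgebra K L) ⊔ (U ⊓ S) ≠ ⊤) :
    IsMaximalSubalgebra K L ((A : LieSubalgebra K L) ⊔ (U ⊓ S)) := by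
  refine ⟨hne, fun V hV => ?_⟩
  have hAV : (A : LieSubalgebra K L) ≤ V := le_sup_left.trans hV.le
  rcases eq_inf_or_eq_of_inf_le_of_le hS hNS hNU (le_inf (le_sup_right.trans hV.le) inf_le_left)
    inf_le_right with h | h
  · refine absurd (fun v hv => ?_) hV.not_ge
    obtain ⟨a, ha, u, hu, rfl⟩ := hAU v
    have huV : u ∈ V := by simpa using sub_mem hv (hAV ha)
    have huUS : u ∈ U ⊓ S := h ▸ (LieSubalgebra.mem_inf _ _ _).mpr ⟨huV, hu⟩
    exact mem_ideal_sup_iff.mpr ⟨a, ha, u, huUS, rfl⟩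
  · refine eq_top_iff.mpr fun x _ => ?_
    obtain ⟨a, ha, u, hu, rfl⟩ := hAU x
    exact add_mem (hAV ha) ((LieSubalgebra.mem_inf _ _ _).mp (h.symm ▸ hu : u ∈ V ⊓ U)).1

theorem ideal_sup_inf_ne_top (hU : IsMaximalSubalgebra K L U) (hS : S ≠ ⊤)
    (hUL : IsCoreOf K L UL U) (hSL : IsCoreOf K L SL S) (hne : UL ≠ SL)
    (hAUS : ∀ a ∈ A, a ∈ U → a ∈ S) : (A : LieSubalgebra K L) ⊔ (U ⊓ S) ≠ ⊤ := by
  intro htop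
  have hUS : U ≤ S := fun u hu => by
    obtain ⟨a, ha, w, hw, rfl⟩ := mem_ideal_sup_iff.mp (htop ▸ LieSubalgebra.mem_top u)
    have hw' := (LieSubalgebra.mem_inf _ _ _).mp hw
    have haU : a ∈ U := by simpa using sub_mem hu hw'.1
    exact add_mem (hAUS a ha haU) hw'.2
  have hUeqS : U = S := by
    by_contra h
    exact hS (hU.2 S (lt_of_le_of_ne hUS h))
  exact hne (hUL.unique (hUeqS ▸ hSL))

theorem sumIsTop_ideal_sup_inf (hAS : SumIsTop K L A S) (hNU : SumIsTop K L N U)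
    (hNS : (N : Set L) ⊆ S) : SumIsTop K L N ((A : LieSubalgebra K L) ⊔ (U ⊓ S)) := by
  intro x
  obtain ⟨a, ha, s, hs, rfl⟩ := hAS x
  obtain ⟨n, hn, u, hu, rfl⟩ := hNU s
  have huS : u ∈ S := by simpa using sub_mem hs (hNS hn)
  refine ⟨n, hn, a + u, mem_ideal_sup_iff.mpr ⟨a, ha, u, ?_, rfl⟩, by abel⟩
  exact (LieSubalgebra.mem_inf _ _ _).mpr ⟨hu, huS⟩

end IdealSupInf

end

variable {K : Type*} {L : Type*} [Field K] [LieRing L] [LieAlgebra K L]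
variable [FiniteDimensional K L]

theorem stmt19 (A B : LieIdeal K L)
    (hAB : IsChiefFactor K L A B) (hna : ¬ FactorAbelian K L A B)
    (U S : LieSubalgebra K L) (UL SL : LieIdeal K L)
    (hU : IsMaximalSubalgebra K L U) (hS : IsMaximalSubalgebra K L S)
    (hUL : IsCoreOf K L UL U) (hSL : IsCoreOf K L SL S) (hne : UL ≠ SL)
    (hUsupp : Supplements K L U A B) (hSsupp : Supplements K L S A B)
    (hU3 : ∃ J1 J2 : LieIdeal K L, QuotPrimitiveType3 K L UL J1 J2)
    (hSmono : QuotMonolithic K L SL) :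
    UL < SL ∧
    (SL : Set L) = {x : L | ∀ a ∈ A, ⁅x, a⁆ ∈ B} ∧
    IsMaximalSubalgebra K L ((A : LieSubalgebra K L) ⊔ (U ⊓ S)) ∧
    IsCoreOf K L (A ⊔ UL) ((A : LieSubalgebra K L) ⊔ (U ⊓ S)) ∧
    (∃! J : LieIdeal K L, IsChiefFactor K L J (A ⊔ UL)) ∧
    (∀ J : LieIdeal K L, IsChiefFactor K L J (A ⊔ UL) → ¬ FactorAbelian K L J (A ⊔ UL)) ∧
    IsChiefFactor K L SL UL ∧
    Supplements K L ((A : LieSubalgebra K L) ⊔ (U ⊓ S)) SL UL := by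
  obtain ⟨J1, J2, ⟨M₀, hM₀, hUL₀⟩, -, -, -, hJ1, hJ2, hJ⟩ := hU3
  have hAU := hUL.not_le_of_sumIsTop hU.1 hUsupp.1
  have hAS := hSL.not_le_of_sumIsTop hS.1 hSsupp.1
  have hBUL : B ≤ UL := hUL.2 B hUsupp.2.2
  have hCA : factorCentralizer A B = SL :=
    factorCentralizer_eq_of_quotMonolithic hAB hna (hSL.2 B hSsupp.2.2) hAS hSmono
  have hULS : UL < SL :=
    lt_of_le_of_ne (hCA ▸ le_factorCentralizer_of_inf_eq (hAB.inf_eq_of_not_le hBUL hAU)) hne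
  have hP := hAB.sup_of_not_le hBUL hAU
  have hPS : ¬ A ⊔ UL ≤ SL := fun h => hAS (le_sup_left.trans h)
  have hSLP : SL ≤ factorCentralizer (A ⊔ UL) UL := hCA ▸ factorCentralizer_le_sup hBUL
  have hSLc : IsChiefFactor K L SL UL := hP.of_le_factorCentralizer hM₀ hUL₀ hULS hPS hSLP
  have hSLna : ¬ FactorAbelian K L SL UL := by rcases hJ SL hSLc with rfl | rfl <;> assumption
  have hCS : factorCentralizer SL UL = A ⊔ UL :=
    factorCentralizer_eq_of_isCoreOf hM₀ hUL₀ hULS hP.1 (le_factorCentralizer_comm.mp hSLP)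
  have hSLU : SumIsTop K L SL U := sumIsTop_of_not_subset hU fun h => hULS.not_ge (hUL.2 SL h)
  have hAUS : ∀ a ∈ A, a ∈ U → a ∈ S := fun a ha haU => hSL.1 <| hULS.le <|
    mem_core_of_mem_factorCentralizer hUL hSLU hBUL (le_factorCentralizer_comm.mp hCA.ge ha) haU
  have hMtop := ideal_sup_inf_ne_top hU hS.1 hUL hSL hne hAUS
  have hPM := sup_subset_ideal_sup (N := A) (M := U ⊓ S) fun _ hx =>
    (LieSubalgebra.mem_inf _ _ _).mpr ⟨hUL.1 hx, hSL.1 (hULS.le hx)⟩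
  have hMsupp : Supplements K L ((A : LieSubalgebra K L) ⊔ (U ⊓ S)) SL UL :=
    ⟨sumIsTop_ideal_sup_inf hSsupp.1 hSLU hSL.1, hULS.le,
      fun _ hx => hPM (LieSubmodule.mem_sup_right hx)⟩
  refine ⟨hULS, by rw [← hCA]; rfl,
    isMaximalSubalgebra_ideal_sup_inf hS hSL.1 hSLU hUsupp.1 hMtop,
    hCS ▸ isCoreOf_factorCentralizer hMtop hMsupp.1 hMsupp.2.2 hSLc (hCS ▸ hPM),
    hCS ▸ quotMonolithic_factorCentralizer hSLc hSLna,
    hCS ▸ fun _ => not_factorAbelian_of_isChiefFactor_factorCentralizer hSLc hSLna,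
    hSLc, hMsupp⟩
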